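/- Let x = (x_1, \dots, x_n) \in \mathbb{R}_{\ge 0}^n, B \ge 1, and let a \in \mathbb{N}^n with a_1 + \dots + a_n = B be such that (1) a minimizes \ell(\cdot, x) over \mathcal{A} = \{b \in \mathbb{N}^n : b_1 + \dots + b_n = B\}, and (2) among all such minimizers, a minimizes the cardinality of the set \arg\max_{i \in [n]} a_i x_i. Then for all i, j \in [n], a_j x_j \le (a_i + 1) x_i. -/
import Mathlib


/-- The proxy loss `ℓ(a, x) := maxᵢ aᵢ xᵢ` (over a nonempty finite index type). -/
noncomputable def proxyLoss {n : ℕ} (a : Fin n → ℕ) (x : Fin n → ℝ) : ℝ :=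
  ⨆ i, (a i : ℝ) * x i

/-- key property of the minimal-cardinality optimal allocation.
Let `x ∈ ℝ≥0ⁿ`, `B ≥ 1`, and let `a ∈ ℕⁿ` with `∑ aᵢ = B` be such that (1) `a`
minimizes `ℓ(·, x)` over `𝒜 = {b ∈ ℕⁿ : ∑ bᵢ = B}`, and (2) among all such
minimizers, `a` minimizes the cardinality of `argmaxᵢ aᵢ xᵢ`. Then for all
`i, j ∈ [n]`, `aⱼ xⱼ ≤ (aᵢ + 1) xᵢ`. -/
theorem stmt_10 (n B : ℕ) (hn : 1 ≤ n) (hB : 1 ≤ B)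
    (x : Fin n → ℝ) (hx : ∀ i, 0 ≤ x i)
    (a : Fin n → ℕ) (hsum : ∑ i, a i = B)
    (hopt : ∀ b : Fin n → ℕ, (∑ i, b i) = B → proxyLoss a x ≤ proxyLoss b x)
    (hcard : ∀ b : Fin n → ℕ, (∑ i, b i) = B → proxyLoss b x = proxyLoss a x →
      {i | (a i : ℝ) * x i = proxyLoss a x}.ncard ≤
        {i | (b i : ℝ) * x i = proxyLoss b x}.ncard) :
    ∀ i j : Fin n, (a j : ℝ) * x j ≤ ((a i : ℝ) + 1) * x i := by
  intro i j
  by_contra hcon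
  push_neg at hcon
  have hne : Nonempty (Fin n) := ⟨⟨0, hn⟩⟩
  set L := proxyLoss a x with hLdef
  have hbdd : BddAbove (Set.range fun k => (a k : ℝ) * x k) :=
    (Set.finite_range _).bddAbove
  have hle : ∀ k, (a k : ℝ) * x k ≤ L := fun k => le_ciSup hbdd k
  obtain ⟨m, hm⟩ := Finite.exists_max (fun k => (a k : ℝ) * x k)
  have hmL : (a m : ℝ) * x m = L := le_antisymm (hle m) (ciSup_le hm)
  have hlt : ((a i : ℝ) + 1) * x i < L := lt_of_lt_of_le hcon (hle j)
  have hLpos : 0 < L := lt_of_le_of_lt (mul_nonneg (by positivity) (hx i)) hlt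
  have hxm : 0 < x m := by
    rcases (hx m).lt_or_eq with h | h
    · exact h
    · exfalso; rw [← h, mul_zero] at hmL; linarith
  have ham : 1 ≤ a m := by
    by_contra h
    push_neg at h
    interval_cases h' : a m <;> simp_all
  have hmi : m ≠ i := by
    intro h
    rw [h] at hmL
    nlinarith [hx i]
  -- the improved allocation
  set b : Fin n → ℕ := Function.update (Function.update a m (a m - 1)) i (a i + 1) with hbdef
  have hbi : b i = a i + 1 := by simp [hbdef]
  have hbm : b m = a m - 1 := by simp [hbdef, Function.update_of_ne hmi]
  have hbk : ∀ k, k ≠ i → k ≠ m → b k = a k := fun k h1 h2 => by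
    simp [hbdef, Function.update_of_ne h1, Function.update_of_ne h2]
  have hsumb : ∑ k, b k = B := by
    have h1 : ∑ k, a k = a i + ∑ k ∈ Finset.univ.erase i, a k :=
      (Finset.add_sum_erase _ _ (Finset.mem_univ i)).symm
    have hmem : m ∈ Finset.univ.erase i := Finset.mem_erase.2 ⟨hmi, Finset.mem_univ m⟩
    have h2 : ∑ k ∈ Finset.univ.erase i, a k
        = a m + ∑ k ∈ (Finset.univ.erase i).erase m, a k :=
      (Finset.add_sum_erase _ _ hmem).symm
    have h1' : ∑ k, b k = b i + ∑ k ∈ Finset.univ.erase i, b k :=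
      (Finset.add_sum_erase _ _ (Finset.mem_univ i)).symm
    have h2' : ∑ k ∈ Finset.univ.erase i, b k
        = b m + ∑ k ∈ (Finset.univ.erase i).erase m, b k :=
      (Finset.add_sum_erase _ _ hmem).symm
    have h3 : ∑ k ∈ (Finset.univ.erase i).erase m, b k
        = ∑ k ∈ (Finset.univ.erase i).erase m, a k := by
      apply Finset.sum_congr rfl
      intro k hk
      simp only [Finset.mem_erase] at hk
      exact hbk k hk.2.1 hk.1
    rw [h1', h2', h3, hbi, hbm]
    rw [h1, h2] at hsum
    omega
  have hbmle : (b m : ℝ) * x m < L := by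
    rw [hbm, ← hmL]
    have : ((a m - 1 : ℕ) : ℝ) < (a m : ℝ) := by
      have : (a m - 1 : ℕ) < a m := by omega
      exact_mod_cast this
    nlinarith
  have hball : ∀ k, (b k : ℝ) * x k ≤ L := by
    intro k
    by_cases hki : k = i
    · rw [hki, hbi]; push_cast; linarith
    by_cases hkm : k = m
    · rw [hkm]; exact hbmle.le
    · rw [hbk k hki hkm]; exact hle k
  have hbloss : proxyLoss b x = L := by
    refine le_antisymm (ciSup_le hball) (hopt b hsumb)
  -- argmax sets
  have hsub : {k | (b k : ℝ) * x k = proxyLoss b x} ⊂ {k | (a k : ℝ) * x k = L} := by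
    constructor
    · intro k hk
      simp only [Set.mem_setOf_eq, hbloss] at hk ⊢
      by_cases hki : k = i
      · exfalso; rw [hki, hbi] at hk; push_cast at hk; linarith
      by_cases hkm : k = m
      · exfalso; rw [hkm] at hk; linarith [hbmle]
      · rwa [hbk k hki hkm] at hk
    · intro hss
      have hmem : m ∈ {k | (a k : ℝ) * x k = L} := hmL
      have := hss hmem
      simp only [Set.mem_setOf_eq, hbloss] at this
      linarith [hbmle]
  have hlt2 : {k | (b k : ℝ) * x k = proxyLoss b x}.ncard
      < {k | (a k : ℝ) * x k = L}.ncard :=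
    Set.ncard_lt_ncard hsub (Set.toFinite _)
  have := hcard b hsumb hbloss
  omega
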